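/- (Lemma 1, part 1.) Let {G_k}_{k≥0} be a B-strongly connected sequence of directed graphs on n nodes, each containing all self-loops, and let {A_k} be the associated column-stochastic weight matrices. Then there exists a sequence {φ_k}_{k≥0} of stochastic vectors in ℝ^n (entries nonnegative, summing to 1) such that for all k ≥ t ≥ 0 and all i, j ∈ {1,…,n}: |[A_{k:t}]_{ij} − φ_k^i| ≤ 4 λ^{k−t}, where λ = (1 − 1/n^{nB})^{1/B}. -/

import Mathlib

/-!
Every node keeps its self-loop and every weight on an edge is at least `1/n`, so an entry of
`A_{t+m:t}` joined by a time-respecting path is at least `n^{-(m+1)}`. Within each block of `B`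
steps the set of nodes reached from a fixed column grows strictly until it is everything, hence
every product of `n * B` consecutive matrices has all entries at least `δ = n^{-nB}`.
Multiplying on the right by such a column-stochastic matrix shrinks the spread `max - min` of
each row by the factor `1 - n δ ≤ λ^{nB}` (Hajnal's argument). Taking `φ_k` to be a column of
`A_{k:0} = A_{k:t} A_{t-1:0}`, each `φ_k^i` is a convex combination of row `i` of `A_{k:t}`,
so it lies within that row's spread.
-/

open Finset Matrix

/-- Number of out-neighbors of `j` other than itself, in the digraph with edge set `E`. -/
def outDeg {n : ℕ} (E : Finset (Fin n × Fin n)) (j : Fin n) : ℕ :=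
  (Finset.univ.filter fun i => (j, i) ∈ E ∧ i ≠ j).card

/-- Number of in-neighbors of `j` other than itself, in the digraph with edge set `E`. -/
def inDeg {n : ℕ} (E : Finset (Fin n × Fin n)) (j : Fin n) : ℕ :=
  (Finset.univ.filter fun i => (i, j) ∈ E ∧ i ≠ j).card

/-- The column-stochastic weight matrix associated with the edge set `E`:
`A i j = 1/(d_j + 1)` if `(j,i) ∈ E` and `0` otherwise. -/
noncomputable def weightMatrix {n : ℕ} (E : Finset (Fin n × Fin n)) :
    Matrix (Fin n) (Fin n) ℝ :=
  Matrix.of fun i j => if (j, i) ∈ E then 1 / (outDeg E j + 1) else 0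

/-- `prodA A t m = A (t+m) * A (t+m-1) * ⋯ * A t`, i.e. the backward product `A_{(t+m):t}`. -/
noncomputable def prodA {n : ℕ} (A : ℕ → Matrix (Fin n) (Fin n) ℝ) (t : ℕ) :
    ℕ → Matrix (Fin n) (Fin n) ℝ
  | 0 => A t
  | m + 1 => A (t + m + 1) * prodA A t m

/-- The digraph on `Fin n` with edge set `E` is strongly connected. -/
def StronglyConnected {n : ℕ} (E : Finset (Fin n × Fin n)) : Prop :=
  ∀ i j : Fin n, Relation.ReflTransGen (fun a b => (a, b) ∈ E) i j

/-- The graph sequence `E` is `B`-strongly connected. -/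
def BStronglyConnected {n : ℕ} (E : ℕ → Finset (Fin n × Fin n)) (B : ℕ) : Prop :=
  ∀ k : ℕ, StronglyConnected ((Finset.Ico (k * B) ((k + 1) * B)).biUnion E)


theorem Relation.ReflTransGen.exists_rel_of_not {α : Type*} {r : α → α → Prop} {p : α → Prop}
    {x y : α} (h : Relation.ReflTransGen r x y) (hx : p x) (hy : ¬p y) :
    ∃ a b, p a ∧ ¬p b ∧ r a b := by
  induction h with
  | refl => exact absurd hx hy
  | @tail b c _ hbc ih =>
    by_cases hb : p b
    · exact ⟨b, c, hb, hy, hbc⟩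
    · exact ih hb

theorem Finset.eq_univ_of_ssubset_succ {α : Type*} [Fintype α] {S : ℕ → Finset α}
    (hS : Monotone S) (hgrow : ∀ r, S r ≠ univ → S r ⊂ S (r + 1)) (h0 : (S 0).Nonempty) :
    S (Fintype.card α - 1) = univ := by
  have hcard : ∀ r, min (Fintype.card α) (r + 1) ≤ #(S r) := by
    intro r
    induction r with
    | zero => have := h0.card_pos; omega
    | succ r ih =>
      by_cases hr : S r = univ
      · have : S (r + 1) = univ := univ_subset_iff.1 (hr ▸ hS r.le_succ)
        rw [this, card_univ]
        exact min_le_left _ _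
      · have := card_lt_card (hgrow r hr)
        omega
  exact eq_univ_of_card _ (le_antisymm (card_le_univ _) (by
    have := hcard (Fintype.card α - 1)
    have := h0.card_pos.trans_le (card_le_univ _)
    omega))

theorem abs_vecMul_sub_vecMul_le {ι : Type*} [Fintype ι] {x : ι → ℝ} {M : Matrix ι ι ℝ}
    {δ c : ℝ} (hM : ∀ j, ∑ i, M i j = 1) (hδ : ∀ i j, δ ≤ M i j)
    (hx : ∀ j j', |x j - x j'| ≤ c) (j j' : ι) :
    |(x ᵥ* M) j - (x ᵥ* M) j'| ≤ (1 - Fintype.card ι * δ) * c := by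
  have : Nonempty ι := ⟨j⟩
  obtain ⟨m₀, hm₀⟩ := Finite.exists_min x
  have hc : 0 ≤ c := (abs_nonneg _).trans (hx j j)
  suffices key : ∀ j j', (x ᵥ* M) j - (x ᵥ* M) j' ≤ (1 - Fintype.card ι * δ) * c from
    abs_sub_le_iff.2 ⟨key j j', key j' j⟩
  intro j j'
  -- The columns of `M` have equal sums, so `x` may be shifted by its minimum `x m₀`.
  have hterm : ∀ m, (x m - x m₀) * (M m j - M m j') ≤ c * (M m j - min (M m j) (M m j')) := by
    intro m
    have h₀ : 0 ≤ x m - x m₀ := sub_nonneg.2 (hm₀ m)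
    have h₁ : x m - x m₀ ≤ c := (le_abs_self _).trans (hx m m₀)
    rcases le_total (M m j) (M m j') with h | h
    · rw [min_eq_left h, sub_self, mul_zero]
      exact mul_nonpos_of_nonneg_of_nonpos h₀ (sub_nonpos.2 h)
    · rw [min_eq_right h]
      exact mul_le_mul_of_nonneg_right h₁ (sub_nonneg.2 h)
  have hmin : Fintype.card ι * δ ≤ ∑ m, min (M m j) (M m j') := by
    simpa using sum_le_sum fun m (_ : m ∈ univ) => le_min (hδ m j) (hδ m j')
  calc (x ᵥ* M) j - (x ᵥ* M) j' = ∑ m, (x m - x m₀) * (M m j - M m j') := by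
        simp only [vecMul, dotProduct, mul_sub, sub_mul, sum_sub_distrib, ← mul_sum, hM]
        ring
    _ ≤ ∑ m, c * (M m j - min (M m j) (M m j')) := sum_le_sum fun m _ => hterm m
    _ = c * (1 - ∑ m, min (M m j) (M m j')) := by rw [← mul_sum, sum_sub_distrib, hM]
    _ ≤ (1 - Fintype.card ι * δ) * c := by nlinarith

theorem abs_sub_vecMul_le {ι : Type*} [Fintype ι] [DecidableEq ι] {x : ι → ℝ}
    {Q : Matrix ι ι ℝ} {c : ℝ} (hQ : Q ∈ colStochastic ℝ ι) (hx : ∀ j j', |x j - x j'| ≤ c)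
    (j j' : ι) : |x j - (x ᵥ* Q) j'| ≤ c := by
  have hsum := sum_col_of_mem_colStochastic hQ j'
  calc |x j - (x ᵥ* Q) j'| = |∑ m, Q m j' * (x j - x m)| := by
        simp only [vecMul, dotProduct, mul_sub, sum_sub_distrib, ← sum_mul, hsum, one_mul,
          mul_comm (x _)]
    _ ≤ ∑ m, Q m j' * c := by
        refine (abs_sum_le_sum_abs _ _).trans (sum_le_sum fun m _ => ?_)
        rw [abs_mul, abs_of_nonneg (nonneg_of_mem_colStochastic hQ)]
        exact mul_le_mul_of_nonneg_left (hx j m) (nonneg_of_mem_colStochastic hQ)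
    _ = c := by rw [← sum_mul, hsum, one_mul]

theorem pow_div_le_two_mul_pow {β μ : ℝ} {N : ℕ} (hN : 0 < N) (hμ₀ : 0 ≤ μ) (hμ₁ : μ ≤ 1)
    (hβ₀ : 0 ≤ β) (hβ : β ≤ μ ^ N) (hhalf : 1 / 2 ≤ μ ^ N) (m : ℕ) :
    β ^ (m / N) ≤ 2 * μ ^ m := by
  have hm : m ≤ N * (m / N) + N := by
    have := Nat.lt_div_mul_add (a := m) hN
    rw [mul_comm]
    omega
  calc β ^ (m / N) ≤ μ ^ (N * (m / N)) := by
        rw [pow_mul]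
        exact pow_le_pow_left₀ hβ₀ hβ _
    _ ≤ 2 * (μ ^ (N * (m / N)) * μ ^ N) := by nlinarith [pow_nonneg hμ₀ (N * (m / N))]
    _ ≤ 2 * μ ^ m := by
        rw [← pow_add]
        exact mul_le_mul_of_nonneg_left (pow_le_pow_of_le_one hμ₀ hμ₁ hm) zero_le_two

noncomputable def contractionRate (n B : ℕ) : ℝ :=
  (1 - 1 / (n : ℝ) ^ (n * B)) ^ ((1 : ℝ) / B)

theorem one_div_pow_mul_self_le_one (n B : ℕ) : 1 / (n : ℝ) ^ (n * B) ≤ 1 := by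
  rcases n.eq_zero_or_pos with rfl | hn
  · simp
  · exact div_le_one_of_le₀ (one_le_pow₀ (by exact_mod_cast hn)) (by positivity)

theorem contractionRate_nonneg (n B : ℕ) : 0 ≤ contractionRate n B :=
  Real.rpow_nonneg (sub_nonneg.2 (one_div_pow_mul_self_le_one n B)) _

theorem contractionRate_le_one (n B : ℕ) : contractionRate n B ≤ 1 :=
  Real.rpow_le_one (sub_nonneg.2 (one_div_pow_mul_self_le_one n B))
    (sub_le_self _ (by positivity)) (by positivity)

theorem one_sub_mul_le_contractionRate_pow (n : ℕ) {B : ℕ} (hB : B ≠ 0) :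
    1 - n * (1 / (n : ℝ) ^ (n * B)) ≤ contractionRate n B ^ (n * B) := by
  have hδ := one_div_pow_mul_self_le_one n B
  set δ := 1 / (n : ℝ) ^ (n * B)
  rw [contractionRate, one_div (B : ℝ), pow_mul', Real.rpow_inv_natCast_pow (by linarith) hB]
  have := one_add_mul_le_pow (a := -δ) (by linarith) n
  rw [← sub_eq_add_neg] at this
  linarith

theorem half_le_one_sub_mul_one_div_pow {n B : ℕ} (hn : 2 ≤ n) (hB : 1 ≤ B) :
    1 / 2 ≤ 1 - n * (1 / (n : ℝ) ^ (n * B)) := by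
  have hn' : (2 : ℝ) ≤ n := by exact_mod_cast hn
  have hpow : (n : ℝ) ^ 2 ≤ (n : ℝ) ^ (n * B) :=
    pow_le_pow_right₀ (by linarith) (hn.trans (Nat.le_mul_of_pos_right n hB))
  have : (n : ℝ) / n ^ (n * B) ≤ 1 / 2 := by
    rw [div_le_iff₀ (by positivity)]
    nlinarith
  rw [mul_one_div]
  linarith

section WeightMatrix

variable {n : ℕ} {E : Finset (Fin n × Fin n)}

variable (E) in
theorem outDeg_lt (j : Fin n) : outDeg E j < n := by
  simpa [outDeg] using card_lt_card (filter_ssubset.2 ⟨j, mem_univ j, by simp⟩)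

theorem card_filter_mem_eq_outDeg_add_one {j : Fin n}
    (hj : (j, j) ∈ E) : #{i | (j, i) ∈ E} = outDeg E j + 1 := by
  have : univ.filter (fun i => (j, i) ∈ E) =
      insert j (univ.filter fun i => (j, i) ∈ E ∧ i ≠ j) := by
    ext i
    by_cases hij : i = j <;> simp [hij, hj]
  rw [this, Finset.card_insert_of_notMem (by simp), outDeg]

theorem weightMatrix_mem_colStochastic (hE : ∀ j, (j, j) ∈ E) :
    weightMatrix E ∈ colStochastic ℝ (Fin n) := by
  refine mem_colStochastic_iff_sum.2 ⟨fun i j => ?_, fun j => ?_⟩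
  · simp only [weightMatrix, of_apply]
    split <;> positivity
  · simp only [weightMatrix, of_apply]
    rw [← Finset.sum_filter, Finset.sum_const, card_filter_mem_eq_outDeg_add_one (hE j),
      nsmul_eq_mul]
    push_cast
    field_simp

theorem inv_le_weightMatrix {i j : Fin n} (h : (j, i) ∈ E) :
    (n : ℝ)⁻¹ ≤ weightMatrix E i j := by
  have : (outDeg E j : ℝ) + 1 ≤ n := by exact_mod_cast outDeg_lt E j
  simp only [weightMatrix, of_apply, if_pos h, one_div]
  exact inv_anti₀ (by positivity) this

end WeightMatrix

section Products

variable {n : ℕ} {A : ℕ → Matrix (Fin n) (Fin n) ℝ} {E : ℕ → Finset (Fin n × Fin n)} {a : ℝ}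

theorem prodA_mem_colStochastic (hA : ∀ k, A k ∈ colStochastic ℝ (Fin n)) (t m : ℕ) :
    prodA A t m ∈ colStochastic ℝ (Fin n) := by
  induction m with
  | zero => exact hA t
  | succ m ih => exact Submonoid.mul_mem _ (hA _) ih

variable (A) in
theorem prodA_add_add_one (t a b : ℕ) :
    prodA A t (a + b + 1) = prodA A (t + b + 1) a * prodA A t b := by
  induction a with
  | zero => rw [Nat.zero_add]; rfl
  | succ a ih =>
    rw [show a + 1 + b + 1 = a + b + 1 + 1 by omega, prodA, ih, ← Matrix.mul_assoc,
      show t + (a + b + 1) + 1 = t + b + 1 + a + 1 by omega]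
    rfl

theorem exists_prodA_eq_mul (hA : ∀ k, A k ∈ colStochastic ℝ (Fin n)) {s t k : ℕ} (hst : s ≤ t)
    (htk : t ≤ k) :
    ∃ Q ∈ colStochastic ℝ (Fin n), prodA A s (k - s) = prodA A t (k - t) * Q := by
  rcases hst.eq_or_lt with rfl | hst
  · exact ⟨1, one_mem _, (mul_one _).symm⟩
  · refine ⟨prodA A s (t - s - 1), prodA_mem_colStochastic hA s _, ?_⟩
    have := prodA_add_add_one A s (k - t) (t - s - 1)
    rwa [show k - t + (t - s - 1) + 1 = k - s by omega,
      show s + (t - s - 1) + 1 = t by omega] at this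

theorem abs_prodA_sub_prodA_le_pow {δ : ℝ} {N : ℕ}
    (hA : ∀ k, A k ∈ colStochastic ℝ (Fin n)) (hN : 0 < N)
    (hlb : ∀ s i j, δ ≤ prodA A s (N - 1) i j) (q r t : ℕ) (i j j' : Fin n) :
    |prodA A t (q * N + r) i j - prodA A t (q * N + r) i j'| ≤ (1 - n * δ) ^ q := by
  induction q generalizing t j j' with
  | zero =>
    have hP := prodA_mem_colStochastic hA t (0 * N + r)
    simpa using abs_sub_le_of_le_of_le (nonneg_of_mem_colStochastic hP)
      (le_one_of_mem_colStochastic hP) (nonneg_of_mem_colStochastic hP)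
      (le_one_of_mem_colStochastic hP)
  | succ q ih =>
    have h := prodA_add_add_one A t (q * N + r) (N - 1)
    rw [show q * N + r + (N - 1) + 1 = (q + 1) * N + r by rw [add_one_mul]; omega,
      show t + (N - 1) + 1 = t + N by omega] at h
    rw [h, mul_apply_eq_vecMul, pow_succ']
    simpa using abs_vecMul_sub_vecMul_le
      (sum_col_of_mem_colStochastic (prodA_mem_colStochastic hA t (N - 1))) (hlb t)
      (ih (t + N)) j j'

theorem pow_le_prodA_succ (hA : ∀ k, A k ∈ colStochastic ℝ (Fin n))
    (hE : ∀ k i j, (j, i) ∈ E k → a ≤ A k i j) (ha : 0 ≤ a) {t m : ℕ} {i l j : Fin n}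
    (hl : a ^ (m + 1) ≤ prodA A t m l j) (hli : (l, i) ∈ E (t + m + 1)) :
    a ^ (m + 2) ≤ prodA A t (m + 1) i j := by
  have hP := prodA_mem_colStochastic hA t m
  calc a ^ (m + 2) = a * a ^ (m + 1) := by ring
    _ ≤ A (t + m + 1) i l * prodA A t m l j :=
      mul_le_mul (hE _ _ _ hli) hl (by positivity) (nonneg_of_mem_colStochastic (hA _))
    _ ≤ ∑ l', A (t + m + 1) i l' * prodA A t m l' j :=
      single_le_sum (f := fun l' => A (t + m + 1) i l' * prodA A t m l' j)
        (fun l' _ => mul_nonneg (nonneg_of_mem_colStochastic (hA _))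
          (nonneg_of_mem_colStochastic hP)) (mem_univ l)
    _ = prodA A t (m + 1) i j := (mul_apply).symm

theorem pow_le_prodA_diag (hA : ∀ k, A k ∈ colStochastic ℝ (Fin n))
    (hE : ∀ k i j, (j, i) ∈ E k → a ≤ A k i j) (ha : 0 ≤ a) (hloop : ∀ k i, (i, i) ∈ E k)
    (t m : ℕ) (j : Fin n) : a ^ (m + 1) ≤ prodA A t m j j := by
  induction m with
  | zero => simpa [prodA] using hE t j j (hloop t j)
  | succ m ih => exact pow_le_prodA_succ hA hE ha ih (hloop _ j)

theorem pow_le_prodA_of_le (hA : ∀ k, A k ∈ colStochastic ℝ (Fin n))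
    (hE : ∀ k i j, (j, i) ∈ E k → a ≤ A k i j) (ha : 0 ≤ a) (hloop : ∀ k i, (i, i) ∈ E k)
    {t m m' : ℕ} {i j : Fin n} (h : a ^ (m + 1) ≤ prodA A t m i j) (hm : m ≤ m') :
    a ^ (m' + 1) ≤ prodA A t m' i j := by
  induction m', hm using Nat.le_induction with
  | base => exact h
  | succ m' _ ih => exact pow_le_prodA_succ hA hE ha ih (hloop _ i)

theorem pow_le_prodA_of_edge (hA : ∀ k, A k ∈ colStochastic ℝ (Fin n))
    (hE : ∀ k i j, (j, i) ∈ E k → a ≤ A k i j) (ha : 0 ≤ a) (hloop : ∀ k i, (i, i) ∈ E k)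
    {t m m' w : ℕ} {i l j : Fin n} (hl : a ^ (m + 1) ≤ prodA A t m l j) (hli : (l, i) ∈ E w)
    (hw : t + m < w) (hw' : w ≤ t + m') : a ^ (m' + 1) ≤ prodA A t m' i j := by
  obtain ⟨m₁, rfl⟩ : ∃ m₁, w = t + m₁ + 1 := ⟨w - t - 1, by omega⟩
  have := pow_le_prodA_succ hA hE ha (pow_le_prodA_of_le hA hE ha hloop hl (by omega)) hli
  exact pow_le_prodA_of_le hA hE ha hloop this (by omega)

theorem pow_le_prodA_of_bStronglyConnected {B : ℕ} (hA : ∀ k, A k ∈ colStochastic ℝ (Fin n))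
    (hE : ∀ k i j, (j, i) ∈ E k → a ≤ A k i j) (ha : 0 ≤ a) (hloop : ∀ k i, (i, i) ∈ E k)
    (hB : 0 < B) (hconn : BStronglyConnected E B) (s : ℕ) (i j : Fin n) :
    a ^ (n * B) ≤ prodA A s (n * B - 1) i j := by
  obtain ⟨k₀, c, hk₀, hc⟩ : ∃ k₀ c, s + c + 1 = k₀ * B ∧ c < B := by
    have := Nat.lt_div_mul_add (a := s) hB
    have := Nat.div_mul_le_self s B
    exact ⟨s / B + 1, s / B * B + B - s - 1, by rw [add_one_mul]; omega, by omega⟩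
  -- `k₀` is the first block starting after time `s`, and `S r` is the set of nodes reached
  -- from `j` by time `(k₀ + r) * B - 1`, just before block `k₀ + r` starts.
  set S : ℕ → Finset (Fin n) := fun r => univ.filter fun x =>
    a ^ (c + r * B + 1) ≤ prodA A s (c + r * B) x j with hS
  have hjS : ∀ r, j ∈ S r := fun r => by
    simpa [hS] using pow_le_prodA_diag hA hE ha hloop s _ j
  have hmono : Monotone S := monotone_nat_of_le_succ fun r x hx => by
    simp only [hS, mem_filter, mem_univ, true_and] at hx ⊢
    exact pow_le_prodA_of_le hA hE ha hloop hx (by rw [add_one_mul]; omega)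
  have hgrow : ∀ r, S r ≠ univ → S r ⊂ S (r + 1) := by
    intro r hr
    obtain ⟨x, hx⟩ := not_forall.1 (mt eq_univ_iff_forall.2 hr)
    obtain ⟨l, y, hl, hy, hly⟩ := (hconn (k₀ + r) j x).exists_rel_of_not (hjS r) hx
    obtain ⟨w, hw, hlyw⟩ := mem_biUnion.1 hly
    rw [mem_Ico, add_one_mul, add_mul] at hw
    refine (ssubset_iff_of_subset (hmono (r.le_add_right 1))).2 ⟨y, ?_, hy⟩
    simp only [hS, mem_filter, mem_univ, true_and] at hl ⊢
    exact pow_le_prodA_of_edge hA hE ha hloop hl hlyw (by omega) (by rw [add_one_mul]; omega)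
  have hfull := Finset.eq_univ_of_ssubset_succ hmono hgrow ⟨j, hjS 0⟩
  rw [Fintype.card_fin] at hfull
  have hi : i ∈ S (n - 1) := hfull ▸ mem_univ i
  simp only [hS, mem_filter, mem_univ, true_and] at hi
  have hnB : (n - 1) * B + B = n * B := by rw [← add_one_mul, Nat.sub_one_add_one i.pos.ne']
  have := pow_le_prodA_of_le hA hE ha hloop hi (m' := n * B - 1) (by omega)
  rwa [show n * B - 1 + 1 = n * B by omega] at this

theorem abs_prodA_sub_le_two_mul_contractionRate_pow {B : ℕ} (hB : 1 ≤ B)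
    (hloop : ∀ k i, (i, i) ∈ E k) (hconn : BStronglyConnected E B)
    (hA : ∀ k, A k = weightMatrix (E k)) (t m : ℕ) (i j j' : Fin n) :
    |prodA A t m i j - prodA A t m i j'| ≤ 2 * contractionRate n B ^ m := by
  rcases (Nat.succ_le_of_lt i.pos).eq_or_lt with rfl | hn
  · rw [Subsingleton.elim j j', sub_self, abs_zero]
    exact mul_nonneg zero_le_two (pow_nonneg (contractionRate_nonneg 1 B) m)
  have hAcs : ∀ k, A k ∈ colStochastic ℝ (Fin n) :=
    fun k => hA k ▸ weightMatrix_mem_colStochastic (hloop k)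
  have hlb : ∀ s i j, 1 / (n : ℝ) ^ (n * B) ≤ prodA A s (n * B - 1) i j := by
    intro s i j
    rw [one_div, ← inv_pow]
    exact pow_le_prodA_of_bStronglyConnected hAcs (fun k i j h => hA k ▸ inv_le_weightMatrix h)
      (by positivity) hloop hB hconn s i j
  have hspread := abs_prodA_sub_prodA_le_pow hAcs (by positivity) hlb (m / (n * B))
    (m % (n * B)) t i j j'
  rw [Nat.div_add_mod'] at hspread
  have hhalf := half_le_one_sub_mul_one_div_pow hn hB
  have hβ := one_sub_mul_le_contractionRate_pow n (B := B) (by omega)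
  exact hspread.trans (pow_div_le_two_mul_pow (by positivity) (contractionRate_nonneg n B)
    (contractionRate_le_one n B) (by linarith) hβ (hhalf.trans hβ) m)

end Products

theorem column_stochastic_product_geometric_convergence
    (n B : ℕ) (hn : 1 ≤ n) (hB : 1 ≤ B)
    (E : ℕ → Finset (Fin n × Fin n)) (hloop : ∀ k i, (i, i) ∈ E k)
    (hconn : BStronglyConnected E B)
    (A : ℕ → Matrix (Fin n) (Fin n) ℝ) (hA : ∀ k, A k = weightMatrix (E k)) :
    ∃ φ : ℕ → Fin n → ℝ,
      (∀ k, (∀ i, 0 ≤ φ k i) ∧ ∑ i, φ k i = 1) ∧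
      ∀ t k, t ≤ k → ∀ i j,
        |prodA A t (k - t) i j - φ k i|
          ≤ 4 * ((1 - 1 / (n : ℝ) ^ (n * B)) ^ ((1 : ℝ) / B)) ^ (k - t) := by
  have hAcs : ∀ k, A k ∈ colStochastic ℝ (Fin n) :=
    fun k => hA k ▸ weightMatrix_mem_colStochastic (hloop k)
  let j₀ : Fin n := ⟨0, hn⟩
  refine ⟨fun k i => prodA A 0 k i j₀, fun k => ⟨fun i => ?_, ?_⟩, fun t k htk i j => ?_⟩
  · exact nonneg_of_mem_colStochastic (prodA_mem_colStochastic hAcs 0 k)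
  · exact sum_col_of_mem_colStochastic (prodA_mem_colStochastic hAcs 0 k) j₀
  obtain ⟨Q, hQ, hfact⟩ := exists_prodA_eq_mul hAcs (Nat.zero_le t) htk
  rw [Nat.sub_zero] at hfact
  change |_ - prodA A 0 k i j₀| ≤ 4 * contractionRate n B ^ (k - t)
  rw [hfact, mul_apply_eq_vecMul]
  have hbound := abs_sub_vecMul_le hQ
    (abs_prodA_sub_le_two_mul_contractionRate_pow hB hloop hconn hA t (k - t) i) j j₀
  linarith [pow_nonneg (contractionRate_nonneg n B) (k - t)]
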